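/- Corollary C.1 (one-dimensional characterization of GLM*): Suppose |X| = 2 and write p_i^N for the scalar probability that agent i assigns to the first alternative in group N. Then the dataset {p^N}_{N∈𝒩} is consistent with GLM* (the general linear-in-means model allowing π_i^N(i) ≥ 0) if and only if for every agent i ∈ 𝒜, whenever both 𝒩_i^{−*} and 𝒩_i^{+*} are nonempty one has min_{N∈𝒩_i^{−*}} p_i^N ≥ max_{N∈𝒩_i^{+*}} p_i^N. -/
import Mathlib


open Finset
open scoped Classical

noncomputable section

/-- The simplex Δ(X) of probability vectors on a finite set X. -/
def simplex (X : Type*) [Fintype X] : Set (X → ℝ) :=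
  {v | (∀ x, 0 ≤ v x) ∧ (∑ x, v x) = 1}

/-- Consistency with GLM*: the general linear-in-means model allowing π_i^N(i) ≥ 0. -/
def GLMStarConsistent {X A : Type*} [Fintype X] [DecidableEq A]
    (𝒩 : Finset (Finset A)) (p : Finset A → A → X → ℝ) : Prop :=
  ∃ v : A → X → ℝ, (∀ i, v i ∈ simplex X) ∧
    ∀ N ∈ 𝒩, ∀ i ∈ N, ∃ π : A → ℝ,
      (∀ j ∈ N, 0 ≤ π j) ∧ (∑ j ∈ N, π j) = 1 ∧
      p N i = π i • v i + ∑ j ∈ N.erase i, π j • p N j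

/-- 𝒩_i^{−*}: the groups containing i where agent i's probability of the first
alternative is strictly smaller than everyone else's. -/
def NminusStar {A : Type*} [DecidableEq A]
    (𝒩 : Finset (Finset A)) (p : Finset A → A → Fin 2 → ℝ) (i : A) : Finset (Finset A) :=
  𝒩.filter (fun N => i ∈ N ∧ ∀ j ∈ N.erase i, p N i 0 < p N j 0)

/-- 𝒩_i^{+*}: the groups containing i where agent i's probability of the first
alternative is strictly larger than everyone else's. -/
def NplusStar {A : Type*} [DecidableEq A]
    (𝒩 : Finset (Finset A)) (p : Finset A → A → Fin 2 → ℝ) (i : A) : Finset (Finset A) :=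
  𝒩.filter (fun N => i ∈ N ∧ ∀ j ∈ N.erase i, p N j 0 < p N i 0)

lemma simplex_snd {x : Fin 2 → ℝ} (h : x ∈ simplex (Fin 2)) : x 1 = 1 - x 0 := by
  have h2 := h.2
  rw [Fin.sum_univ_two] at h2
  linarith

lemma key_le {A : Type*} [DecidableEq A] (N : Finset A) (i : A) (hi : i ∈ N)
    (π : A → ℝ) (hπ0 : ∀ j ∈ N, 0 ≤ π j) (hπ1 : ∑ j ∈ N, π j = 1)
    (u : ℝ) (g : A → ℝ) (c : ℝ)
    (heq : c = π i * u + ∑ j ∈ N.erase i, π j * g j)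
    (hlt : ∀ j ∈ N.erase i, c < g j) : u ≤ c := by
  by_contra hcu
  push_neg at hcu
  set w : A → ℝ := fun j => if j = i then u else g j with hw
  have hsum : (∑ j ∈ N, π j * w j) = π i * w i + ∑ j ∈ N.erase i, π j * w j :=
    (Finset.add_sum_erase N (fun j => π j * w j) hi).symm
  have hwer : ∀ j ∈ N.erase i, w j = g j := by
    intro j hj
    simp [hw, (Finset.mem_erase.1 hj).1]
  have heq' : c = ∑ j ∈ N, π j * w j := by
    rw [hsum]
    rw [heq]
    congr 1
    · simp [hw]
    · exact (Finset.sum_congr rfl (fun j hj => by rw [hwer j hj])).symm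
  have hcw : ∀ j ∈ N, c < w j := by
    intro j hj
    rcases eq_or_ne j i with rfl | hne
    · simpa [hw] using hcu
    · rw [hwer j (Finset.mem_erase.2 ⟨hne, hj⟩)]
      exact hlt j (Finset.mem_erase.2 ⟨hne, hj⟩)
  obtain ⟨k, hk, hkpos⟩ : ∃ k ∈ N, 0 < π k := by
    by_contra h
    push_neg at h
    have : ∑ j ∈ N, π j = 0 :=
      Finset.sum_eq_zero fun j hj => le_antisymm (h j hj) (hπ0 j hj)
    rw [this] at hπ1; norm_num at hπ1
  have hstrict : ∑ j ∈ N, π j * c < ∑ j ∈ N, π j * w j := by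
    refine Finset.sum_lt_sum (fun j hj => mul_le_mul_of_nonneg_left (hcw j hj).le (hπ0 j hj))
      ⟨k, hk, mul_lt_mul_of_pos_left (hcw k hk) hkpos⟩
  rw [← Finset.sum_mul, hπ1, one_mul, ← heq'] at hstrict
  exact lt_irrefl c hstrict

lemma key_ge {A : Type*} [DecidableEq A] (N : Finset A) (i : A) (hi : i ∈ N)
    (π : A → ℝ) (hπ0 : ∀ j ∈ N, 0 ≤ π j) (hπ1 : ∑ j ∈ N, π j = 1)
    (u : ℝ) (g : A → ℝ) (c : ℝ)
    (heq : c = π i * u + ∑ j ∈ N.erase i, π j * g j)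
    (hlt : ∀ j ∈ N.erase i, g j < c) : c ≤ u := by
  have := key_le N i hi π hπ0 hπ1 (-u) (fun j => -(g j)) (-c)
    (by simp only [mul_neg, Finset.sum_neg_distrib, heq]; ring)
    (fun j hj => by simpa using hlt j hj)
  linarith

lemma combo {A : Type*} [DecidableEq A] (N : Finset A) (w : A → ℝ) (c : ℝ)
    (ha : ∃ a ∈ N, w a ≤ c) (hb : ∃ b ∈ N, c ≤ w b) :
    ∃ π : A → ℝ, (∀ j ∈ N, 0 ≤ π j) ∧ (∑ j ∈ N, π j) = 1 ∧
      ∑ j ∈ N, π j * w j = c := by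
  obtain ⟨a, haN, hac⟩ := ha
  obtain ⟨b, hbN, hcb⟩ := hb
  rcases eq_or_lt_of_le (hac.trans hcb) with heq | hlt
  · refine ⟨fun j => if j = a then 1 else 0, fun j _ => by positivity, ?_, ?_⟩
    · simp [haN]
    · have : c = w a := le_antisymm (heq ▸ hcb) hac
      simp [ite_mul, haN, this]
  · set t : ℝ := (w b - c) / (w b - w a) with ht
    have hden : 0 < w b - w a := by linarith
    have ht0 : 0 ≤ t := div_nonneg (by linarith) hden.le
    have ht1 : t ≤ 1 := by
      rw [ht, div_le_one hden]; linarith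
    refine ⟨fun j => (if j = a then t else 0) + (if j = b then 1 - t else 0),
      fun j _ => add_nonneg (by split_ifs <;> linarith) (by split_ifs <;> linarith), ?_, ?_⟩
    · simp [Finset.sum_add_distrib, haN, hbN]
    · have : ∀ j, ((if j = a then t else 0) + (if j = b then 1 - t else 0)) * w j
          = (if j = a then t * w j else 0) + (if j = b then (1 - t) * w j else 0) := by
        intro j; split <;> split <;> ring
      rw [Finset.sum_congr rfl (fun j _ => this j), Finset.sum_add_distrib]
      rw [Finset.sum_ite_eq' N a, Finset.sum_ite_eq' N b, if_pos haN, if_pos hbN]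
      rw [ht]
      field_simp
      ring

/-- Corollary C.1: one-dimensional (|X| = 2) characterization of GLM*. -/
theorem glmstar_one_dimensional_characterization
    {A : Type*} [Fintype A] [DecidableEq A] (hA : 2 ≤ Fintype.card A)
    (𝒩 : Finset (Finset A)) (h𝒩 : 𝒩.Nonempty) (h𝒩' : ∀ N ∈ 𝒩, N.Nonempty)
    (p : Finset A → A → Fin 2 → ℝ) (hp : ∀ N ∈ 𝒩, ∀ i ∈ N, p N i ∈ simplex (Fin 2)) :
    GLMStarConsistent 𝒩 p ↔
      ∀ i : A, ∀ (h1 : (NminusStar 𝒩 p i).Nonempty) (h2 : (NplusStar 𝒩 p i).Nonempty),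
        ((NplusStar 𝒩 p i).image (fun N => p N i 0)).max' (h2.image _) ≤
          ((NminusStar 𝒩 p i).image (fun N => p N i 0)).min' (h1.image _) := by
  have hbounds : ∀ N ∈ 𝒩, ∀ i ∈ N, 0 ≤ p N i 0 ∧ p N i 0 ≤ 1 := by
    intro N hN i hiN
    have h := hp N hN i hiN
    have h1 := simplex_snd h
    have h0 := h.1 0
    have h1' := h.1 1
    constructor <;> linarith
  constructor
  · rintro ⟨v, hv, hglm⟩ i h1 h2
    have hvle : ∀ N ∈ NminusStar 𝒩 p i, v i 0 ≤ p N i 0 := by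
      intro N hN
      simp only [NminusStar, Finset.mem_filter] at hN
      obtain ⟨hN𝒩, hiN, hlt⟩ := hN
      obtain ⟨π, hπ0, hπ1, heq⟩ := hglm N hN𝒩 i hiN
      have heq0 : p N i 0 = π i * v i 0 + ∑ j ∈ N.erase i, π j * p N j 0 := by
        have := congrFun heq 0
        simpa using this
      exact key_le N i hiN π hπ0 hπ1 (v i 0) (fun j => p N j 0) (p N i 0) heq0 hlt
    have hvge : ∀ N ∈ NplusStar 𝒩 p i, p N i 0 ≤ v i 0 := by
      intro N hN
      simp only [NplusStar, Finset.mem_filter] at hN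
      obtain ⟨hN𝒩, hiN, hlt⟩ := hN
      obtain ⟨π, hπ0, hπ1, heq⟩ := hglm N hN𝒩 i hiN
      have heq0 : p N i 0 = π i * v i 0 + ∑ j ∈ N.erase i, π j * p N j 0 := by
        have := congrFun heq 0
        simpa using this
      exact key_ge N i hiN π hπ0 hπ1 (v i 0) (fun j => p N j 0) (p N i 0) heq0 hlt
    have hA1 : ((NplusStar 𝒩 p i).image (fun N => p N i 0)).max' (h2.image _) ≤ v i 0 := by
      apply Finset.max'_le
      intro y hy
      obtain ⟨N, hN, rfl⟩ := Finset.mem_image.1 hy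
      exact hvge N hN
    have hA2 : v i 0 ≤ ((NminusStar 𝒩 p i).image (fun N => p N i 0)).min' (h1.image _) := by
      apply Finset.le_min'
      intro y hy
      obtain ⟨N, hN, rfl⟩ := Finset.mem_image.1 hy
      exact hvle N hN
    exact hA1.trans hA2
  · intro hcond
    set c : A → ℝ := fun i =>
      if h : (NplusStar 𝒩 p i).Nonempty then
        ((NplusStar 𝒩 p i).image (fun N => p N i 0)).max' (h.image _)
      else if h' : (NminusStar 𝒩 p i).Nonempty then
        ((NminusStar 𝒩 p i).image (fun N => p N i 0)).min' (h'.image _)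
      else (1:ℝ)/2 with hc
    have hc_plus : ∀ i N, N ∈ NplusStar 𝒩 p i → p N i 0 ≤ c i := by
      intro i N hN
      have hne : (NplusStar 𝒩 p i).Nonempty := ⟨N, hN⟩
      rw [hc]
      simp only [hne, dif_pos]
      exact Finset.le_max' ((NplusStar 𝒩 p i).image (fun N => p N i 0)) (p N i 0)
        (Finset.mem_image_of_mem _ hN)
    have hc_minus : ∀ i N, N ∈ NminusStar 𝒩 p i → c i ≤ p N i 0 := by
      intro i N hN
      have hne : (NminusStar 𝒩 p i).Nonempty := ⟨N, hN⟩
      rw [hc]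
      by_cases hpl : (NplusStar 𝒩 p i).Nonempty
      · simp only [hpl, dif_pos]
        exact (hcond i hne hpl).trans
          (Finset.min'_le _ (p N i 0) (Finset.mem_image_of_mem (fun N => p N i 0) hN))
      · simp only [hpl, dif_neg, not_false_iff, hne, dif_pos]
        exact Finset.min'_le _ (p N i 0) (Finset.mem_image_of_mem (fun N => p N i 0) hN)
    have hc01 : ∀ i, 0 ≤ c i ∧ c i ≤ 1 := by
      intro i
      rw [hc]
      by_cases hpl : (NplusStar 𝒩 p i).Nonempty
      · simp only [hpl, dif_pos]
        have hmem := Finset.max'_mem _ ((hpl).image (fun N => p N i 0))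
        obtain ⟨N, hN, hval⟩ := Finset.mem_image.1 hmem
        simp only [NplusStar, Finset.mem_filter] at hN
        obtain ⟨hN𝒩, hiN, _⟩ := hN
        rw [← hval]
        exact hbounds N hN𝒩 i hiN
      · simp only [hpl, dif_neg, not_false_iff]
        by_cases hmi : (NminusStar 𝒩 p i).Nonempty
        · simp only [hmi, dif_pos]
          have hmem := Finset.min'_mem _ ((hmi).image (fun N => p N i 0))
          obtain ⟨N, hN, hval⟩ := Finset.mem_image.1 hmem
          simp only [NminusStar, Finset.mem_filter] at hN
          obtain ⟨hN𝒩, hiN, _⟩ := hN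
          rw [← hval]
          exact hbounds N hN𝒩 i hiN
        · simp only [hmi, dif_neg, not_false_iff]
          norm_num
    refine ⟨fun i => ![c i, 1 - c i], ?_, ?_⟩
    · intro i
      constructor
      · intro x
        fin_cases x <;> simp [(hc01 i).1, (hc01 i).2] <;> linarith [(hc01 i).2]
      · rw [Fin.sum_univ_two]; simp
    · intro N hN i hiN
      set w : A → ℝ := fun j => if j = i then c i else p N j 0 with hw
      have ha : ∃ a ∈ N, w a ≤ p N i 0 := by
        by_cases h : ∀ j ∈ N.erase i, p N i 0 < p N j 0
        · refine ⟨i, hiN, ?_⟩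
          have hm : N ∈ NminusStar 𝒩 p i := by
            simp only [NminusStar, Finset.mem_filter]
            exact ⟨hN, hiN, h⟩
          simpa [hw] using hc_minus i N hm
        · push_neg at h
          obtain ⟨j, hj, hle⟩ := h
          refine ⟨j, Finset.mem_of_mem_erase hj, ?_⟩
          simpa [hw, (Finset.mem_erase.1 hj).1] using hle
      have hb : ∃ b ∈ N, p N i 0 ≤ w b := by
        by_cases h : ∀ j ∈ N.erase i, p N j 0 < p N i 0
        · refine ⟨i, hiN, ?_⟩
          have hm : N ∈ NplusStar 𝒩 p i := by
            simp only [NplusStar, Finset.mem_filter]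
            exact ⟨hN, hiN, h⟩
          simpa [hw] using hc_plus i N hm
        · push_neg at h
          obtain ⟨j, hj, hle⟩ := h
          refine ⟨j, Finset.mem_of_mem_erase hj, ?_⟩
          simpa [hw, (Finset.mem_erase.1 hj).1] using hle
      obtain ⟨π, hπ0, hπ1, hπw⟩ := combo N w (p N i 0) ha hb
      have hsplit : π i * c i + ∑ j ∈ N.erase i, π j * p N j 0 = p N i 0 := by
        rw [← hπw, ← Finset.add_sum_erase N (fun j => π j * w j) hiN]
        congr 1
        · simp [hw]
        · exact Finset.sum_congr rfl fun j hj => by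
            simp [hw, (Finset.mem_erase.1 hj).1]
      have hπsplit : π i + ∑ j ∈ N.erase i, π j = 1 := by
        rw [Finset.add_sum_erase N π hiN]; exact hπ1
      have hpi1 : p N i 1 = 1 - p N i 0 := simplex_snd (hp N hN i hiN)
      have hsub : ∑ j ∈ N.erase i, π j * p N j 1
          = ∑ j ∈ N.erase i, (π j - π j * p N j 0) := by
        refine Finset.sum_congr rfl fun j hj => ?_
        rw [simplex_snd (hp N hN j (Finset.mem_of_mem_erase hj))]
        ring
      have hx0 : p N i 0 = π i * c i + ∑ j ∈ N.erase i, π j * p N j 0 := hsplit.symm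
      have hx1 : p N i 1 = π i * (1 - c i) + ∑ j ∈ N.erase i, π j * p N j 1 := by
        rw [hpi1, hsub, Finset.sum_sub_distrib]
        linarith [hsplit, hπsplit]
      refine ⟨π, hπ0, hπ1, funext fun x => ?_⟩
      fin_cases x
      · simpa [Finset.sum_apply] using hx0
      · simpa [Finset.sum_apply] using hx1
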